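/- Let λ be a labeling of G_oct such that every face satisfies the strict triangle inequality. Then λ is flexible, i.e. there are infinitely many pairwise non-congruent realizations in ℝ³ compatible with λ, if and only if there are infinitely many pairwise non-congruent compatible spherical realizations, where two spherical realizations q, q' : E_oct → ℝ³ are congruent if q' = A ∘ q for some orthogonal linear map A of ℝ³. -/

import Mathlib

open EuclideanGeometry

noncomputable section

/-- Points of Euclidean 3-space. -/
abbrev Pt : Type := EuclideanSpace ℝ (Fin 3)

/-- The vertex set of the octahedral graph. -/
def octV : Finset ℕ := {1, 2, 3, 4, 5, 6}

/-- `{i, j}` is an edge of the octahedral graph `G_oct`. -/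
def IsOctEdge (i j : ℕ) : Prop :=
  i ∈ octV ∧ j ∈ octV ∧ i ≠ j ∧
    ({i, j} : Finset ℕ) ≠ {1, 2} ∧ ({i, j} : Finset ℕ) ≠ {3, 4} ∧ ({i, j} : Finset ℕ) ≠ {5, 6}

/-- `{i, j, k}` is a face of the octahedron. -/
def IsOctFace (i j k : ℕ) : Prop :=
  ({i, j, k} : Finset ℕ) ∈
    ({ {1,3,5}, {1,3,6}, {1,4,5}, {1,4,6}, {2,3,5}, {2,3,6}, {2,4,5}, {2,4,6} } :
      Finset (Finset ℕ))

/-- A realization `ρ` is compatible with the labeling `lam`. -/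
def Compatible (lam : Sym2 ℕ → ℝ) (ρ : ℕ → Pt) : Prop :=
  ∀ i j, IsOctEdge i j → dist (ρ i) (ρ j) = lam s(i, j)

/-- Two realizations are congruent if they differ by an isometry of `ℝ³`. -/
def OctCongruent (ρ₁ ρ₂ : ℕ → Pt) : Prop :=
  ∃ σ : Pt ≃ᵢ Pt, ∀ i ∈ octV, ρ₁ i = σ (ρ₂ i)

/-- The labeling `lam` is flexible in `ℝ³`. -/
def Flexible (lam : Sym2 ℕ → ℝ) : Prop :=
  ∃ S : Set (ℕ → Pt), S.Infinite ∧ (∀ ρ ∈ S, Compatible lam ρ) ∧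
    ∀ ρ₁ ∈ S, ∀ ρ₂ ∈ S, ρ₁ ≠ ρ₂ → ¬ OctCongruent ρ₁ ρ₂

/-- The fixed orientation of the edges of `G_oct`. -/
def dOrient : List (ℕ × ℕ) :=
  [(1,6), (1,3), (4,1), (5,1), (6,3), (4,6), (6,2), (3,5), (3,2), (5,4), (2,4), (2,5)]

/-- The signed length `ℓ_{ij}`: it equals `λ{i,j}` if `(i,j)` belongs to the fixed
orientation and `-λ{i,j}` otherwise. -/
def sgnLen (lam : Sym2 ℕ → ℝ) (i j : ℕ) : ℝ :=
  if (i, j) ∈ dOrient then lam s(i, j) else - lam s(i, j)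

/-- The edges of `G_oct`, i.e. the set `E_oct`, as a subtype of `Sym2 ℕ`. -/
abbrev OctE : Type := {e : Sym2 ℕ // ∃ i j, IsOctEdge i j ∧ e = s(i, j)}

/-- `q : E_oct → ℝ³` is a compatible spherical realization for the labeling `lam`. -/
def SphCompatible (lam : Sym2 ℕ → ℝ) (q : OctE → Pt) : Prop :=
  (∀ e : OctE, ‖q e‖ = 1) ∧
  ∀ (e f : OctE) (i j m : ℕ), IsOctFace i j m →
    (e : Sym2 ℕ) = s(i, j) → (f : Sym2 ℕ) = s(m, j) →
    sgnLen lam i j * sgnLen lam m j * (inner ℝ (q e) (q f) : ℝ) =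
      (lam s(i, j) ^ 2 + lam s(m, j) ^ 2 - lam s(i, m) ^ 2) / 2

/-- Two spherical realizations are congruent if they differ by an orthogonal linear
map of `ℝ³`. -/
def SphCongruent (q₁ q₂ : OctE → Pt) : Prop :=
  ∃ A : Pt ≃ₗᵢ[ℝ] Pt, ∀ e, q₂ e = A (q₁ e)

/-!
A realization `ρ` gives the spherical realization `q({i,j}) = (ρ j - ρ i) / ℓ_{ij}`, whose face
conditions are the law of cosines. Conversely, the face conditions at the three corners of a
face say that `‖ℓ_{ij} q_{ij} + ℓ_{jm} q_{jm} + ℓ_{mi} q_{mi}‖² = 0`, so the edge vectors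
`ℓ_{ij} q_{ij}` sum to zero around every face. The faces generate the cycle space of the
octahedron, hence the edge vectors are the differences `ρ j - ρ i` of a realization, unique up to
translation. Under this correspondence isometries of realizations become orthogonal maps of
spherical realizations and vice versa, so non-congruent classes correspond to each other.
-/

open scoped InnerProductSpace

instance (i j : ℕ) : Decidable (IsOctEdge i j) := by unfold IsOctEdge; infer_instance

instance (i j m : ℕ) : Decidable (IsOctFace i j m) := by unfold IsOctFace; infer_instance

theorem IsOctEdge.symm {i j : ℕ} (h : IsOctEdge i j) : IsOctEdge j i := by
  obtain ⟨hi, hj, hne, h₁, h₂, h₃⟩ := h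
  simp only [IsOctEdge, Finset.pair_comm j i]
  exact ⟨hj, hi, hne.symm, h₁, h₂, h₃⟩

theorem IsOctFace.rotate {i j m : ℕ} (h : IsOctFace i j m) : IsOctFace j m i := by
  have hperm : ({j, m, i} : Finset ℕ) = {i, j, m} := by
    ext; simp only [Finset.mem_insert, Finset.mem_singleton]; tauto
  rwa [IsOctFace, hperm]

theorem IsOctFace.mem_octV {i j m : ℕ} (h : IsOctFace i j m) : i ∈ octV ∧ j ∈ octV := by
  have hsub : ({i, j, m} : Finset ℕ) ⊆ octV := by
    unfold IsOctFace at h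
    generalize ({i, j, m} : Finset ℕ) = s at h ⊢
    revert s
    decide
  exact ⟨hsub (by simp), hsub (by simp)⟩

theorem IsOctFace.isOctEdge {i j m : ℕ} (h : IsOctFace i j m) : IsOctEdge i j := by
  obtain ⟨hi, hj⟩ := h.mem_octV
  have hm := h.rotate.rotate.mem_octV.1
  revert h
  fin_cases hi <;> fin_cases hj <;> fin_cases hm <;> decide

theorem isOctEdge_one_iff {k : ℕ} : IsOctEdge 1 k ↔ k = 3 ∨ k = 4 ∨ k = 5 ∨ k = 6 := by
  constructor
  · intro h
    have hk := h.2.1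
    revert h
    fin_cases hk <;> decide
  · rintro (rfl | rfl | rfl | rfl) <;> decide

theorem isOctEdge_two_iff {k : ℕ} : IsOctEdge 2 k ↔ k = 3 ∨ k = 4 ∨ k = 5 ∨ k = 6 := by
  constructor
  · intro h
    have hk := h.2.1
    revert h
    fin_cases hk <;> decide
  · rintro (rfl | rfl | rfl | rfl) <;> decide

theorem isOctFace_one_of_isOctEdge {i j : ℕ} (h : IsOctEdge i j) (hi₁ : i ≠ 1) (hj₁ : j ≠ 1)
    (hi₂ : i ≠ 2) (hj₂ : j ≠ 2) : IsOctFace 1 i j := by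
  have hi := h.1
  have hj := h.2.1
  revert h hi₁ hj₁ hi₂ hj₂
  fin_cases hi <;> fin_cases hj <;> decide

theorem mem_dOrient_swap_iff {i j : ℕ} (h : IsOctEdge i j) :
    (j, i) ∈ dOrient ↔ (i, j) ∉ dOrient := by
  have hi := h.1
  have hj := h.2.1
  revert h
  fin_cases hi <;> fin_cases hj <;> decide

theorem sgnLen_swap (lam : Sym2 ℕ → ℝ) {i j : ℕ} (h : IsOctEdge i j) :
    sgnLen lam j i = -sgnLen lam i j := by
  by_cases hij : (i, j) ∈ dOrient
  · have hji : (j, i) ∉ dOrient := by rw [mem_dOrient_swap_iff h]; exact not_not.2 hij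
    simp [sgnLen, hij, hji, Sym2.eq_swap]
  · simp [sgnLen, hij, (mem_dOrient_swap_iff h).2 hij, Sym2.eq_swap]

theorem sgnLen_sq (lam : Sym2 ℕ → ℝ) (i j : ℕ) : sgnLen lam i j ^ 2 = lam s(i, j) ^ 2 := by
  unfold sgnLen; split <;> ring

theorem abs_sgnLen {lam : Sym2 ℕ → ℝ} {i j : ℕ} (h : 0 < lam s(i, j)) :
    |sgnLen lam i j| = lam s(i, j) := by
  rw [← sq_eq_sq₀ (abs_nonneg _) h.le, sq_abs, sgnLen_sq]

theorem sgnLen_ne_zero {lam : Sym2 ℕ → ℝ} {i j : ℕ} (h : 0 < lam s(i, j)) :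
    sgnLen lam i j ≠ 0 :=
  abs_ne_zero.mp (abs_sgnLen h ▸ h.ne')

theorem add_add_eq_zero_of_two_inner_eq {E : Type*} [NormedAddCommGroup E]
    [InnerProductSpace ℝ E] {x y z : E}
    (hxy : 2 * ⟪x, y⟫_ℝ = ‖z‖ ^ 2 - ‖x‖ ^ 2 - ‖y‖ ^ 2)
    (hyz : 2 * ⟪y, z⟫_ℝ = ‖x‖ ^ 2 - ‖y‖ ^ 2 - ‖z‖ ^ 2)
    (hzx : 2 * ⟪z, x⟫_ℝ = ‖y‖ ^ 2 - ‖z‖ ^ 2 - ‖x‖ ^ 2) : x + y + z = 0 := by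
  have h : ‖x + y + z‖ ^ 2 = 0 := by
    rw [norm_add_sq_real, norm_add_sq_real, inner_add_left, real_inner_comm z x]
    linarith
  exact norm_eq_zero.mp (pow_eq_zero_iff two_ne_zero |>.mp h)

def IsOctEdge.toOctE {i j : ℕ} (h : IsOctEdge i j) : OctE := ⟨s(i, j), i, j, h, rfl⟩

theorem IsOctEdge.toOctE_symm {i j : ℕ} (h : IsOctEdge i j) : h.symm.toOctE = h.toOctE :=
  Subtype.ext Sym2.eq_swap

section Spherical

variable {lam : Sym2 ℕ → ℝ} {q : OctE → Pt}

def edgeVec (lam : Sym2 ℕ → ℝ) (q : OctE → Pt) (i j : ℕ) : Pt :=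
  if h : IsOctEdge i j then sgnLen lam i j • q h.toOctE else 0

theorem edgeVec_of_isOctEdge {i j : ℕ} (h : IsOctEdge i j) :
    edgeVec lam q i j = sgnLen lam i j • q h.toOctE :=
  dif_pos h

theorem edgeVec_swap (i j : ℕ) : edgeVec lam q j i = -edgeVec lam q i j := by
  by_cases h : IsOctEdge i j
  · rw [edgeVec_of_isOctEdge h, edgeVec_of_isOctEdge h.symm, h.toOctE_symm,
      sgnLen_swap lam h, neg_smul]
  · rw [edgeVec, edgeVec, dif_neg (mt IsOctEdge.symm h), dif_neg h, neg_zero]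

theorem sq_norm_edgeVec (hq : SphCompatible lam q) {i j : ℕ} (h : IsOctEdge i j) :
    ‖edgeVec lam q i j‖ ^ 2 = lam s(i, j) ^ 2 := by
  rw [edgeVec_of_isOctEdge h, norm_smul, hq.1, mul_one, Real.norm_eq_abs, sq_abs, sgnLen_sq]

theorem two_inner_edgeVec (hq : SphCompatible lam q) {i j m : ℕ} (hf : IsOctFace i j m) :
    2 * ⟪edgeVec lam q i j, edgeVec lam q j m⟫_ℝ =
      lam s(m, i) ^ 2 - lam s(i, j) ^ 2 - lam s(j, m) ^ 2 := by
  have hij := hf.isOctEdge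
  have hmj := hf.rotate.isOctEdge.symm
  have hcos := hq.2 hij.toOctE hmj.toOctE i j m hf rfl rfl
  rw [edgeVec_swap m j, edgeVec_of_isOctEdge hij, edgeVec_of_isOctEdge hmj, inner_neg_right,
    real_inner_smul_left, real_inner_smul_right, Sym2.eq_swap (a := m) (b := i),
    Sym2.eq_swap (a := j) (b := m)]
  linarith

theorem edgeVec_add_add_eq_zero (hq : SphCompatible lam q) {i j m : ℕ}
    (hf : IsOctFace i j m) :
    edgeVec lam q i j + edgeVec lam q j m + edgeVec lam q m i = 0 := by
  apply add_add_eq_zero_of_two_inner_eq <;>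
  rw [sq_norm_edgeVec hq hf.isOctEdge, sq_norm_edgeVec hq hf.rotate.isOctEdge,
    sq_norm_edgeVec hq hf.rotate.rotate.isOctEdge]
  exacts [two_inner_edgeVec hq hf, two_inner_edgeVec hq hf.rotate,
    two_inner_edgeVec hq hf.rotate.rotate]

end Spherical

theorem exists_potential_of_face_sum_eq_zero {V : Type*} [AddCommGroup V] (w : ℕ → ℕ → V)
    (hswap : ∀ i j, IsOctEdge i j → w j i = -w i j)
    (hface : ∀ i j m, IsOctFace i j m → w i j + w j m + w m i = 0) :
    ∃ P : ℕ → V, ∀ i j, IsOctEdge i j → P j - P i = w i j := by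
  have hquad : ∀ a b, IsOctFace 1 a b → IsOctFace 2 a b → w 1 a + w a 2 = w 1 b + w b 2 := by
    intro a b h₁ h₂
    linear_combination (norm := abel) hface 1 a b h₁ - hface 2 a b h₂
      - hswap 1 b h₁.rotate.rotate.isOctEdge.symm + hswap a 2 h₂.isOctEdge.symm
  have hpath : ∀ k, IsOctEdge 1 k → w 1 k + w k 2 = w 1 3 + w 3 2 := by
    intro k hk
    rcases isOctEdge_one_iff.mp hk with rfl | rfl | rfl | rfl
    · rfl
    · exact (hquad 4 5 (by decide) (by decide)).trans (hquad 5 3 (by decide) (by decide))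
    · exact hquad 5 3 (by decide) (by decide)
    · exact hquad 6 3 (by decide) (by decide)
  -- Integrate `w` from vertex `1`, reaching `2` through `3`; the quadrilaterals `1-a-2-b`, each
  -- the union of two faces, show that every path to `2` gives the same value.
  let P : ℕ → V := fun n => if n = 1 then 0 else if n = 2 then w 1 3 + w 3 2 else w 1 n
  have hP : ∀ k, IsOctEdge 1 k → P k = w 1 k := by
    intro k hk
    rcases isOctEdge_one_iff.mp hk with rfl | rfl | rfl | rfl <;> rfl
  have hequator : ∀ k, IsOctEdge 2 k → IsOctEdge 1 k := fun k hk =>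
    isOctEdge_one_iff.mpr (isOctEdge_two_iff.mp hk)
  refine ⟨P, fun i j h => ?_⟩
  rcases eq_or_ne i 1 with rfl | hi₁
  · simp [P, hP j h]
  rcases eq_or_ne j 1 with rfl | hj₁
  · simp [P, hP i h.symm, hswap 1 i h.symm]
  rcases eq_or_ne i 2 with rfl | hi₂
  · rw [hP j (hequator j h), show P 2 = _ from (hpath j (hequator j h)).symm, hswap j 2 h.symm]
    abel
  rcases eq_or_ne j 2 with rfl | hj₂
  · rw [hP i (hequator i h.symm), show P 2 = _ from (hpath i (hequator i h.symm)).symm]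
    abel
  have hf := isOctFace_one_of_isOctEdge h hi₁ hj₁ hi₂ hj₂
  rw [hP i hf.isOctEdge, hP j hf.rotate.rotate.isOctEdge.symm]
  linear_combination (norm := abel) -hface 1 i j hf + hswap 1 j hf.rotate.rotate.isOctEdge.symm

theorem eq_of_forall_isOctEdge {V : Type*} (D : ℕ → V) (hD : ∀ i j, IsOctEdge i j → D i = D j) :
    ∀ i ∈ octV, D i = D 1 := by
  intro i hi
  fin_cases hi
  · rfl
  · exact (hD 2 3 (by decide)).trans (hD 3 1 (by decide))
  all_goals exact hD _ 1 (by decide)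

/-- `q({i,j}) = (ρ j - ρ i) / ℓ_{ij}`, computed from a chosen ordering `(i, j)` of the edge;
by `sphericalOf_apply` the result does not depend on the choice. -/
def sphericalOf (lam : Sym2 ℕ → ℝ) (ρ : ℕ → Pt) (e : OctE) : Pt :=
  (sgnLen lam e.2.choose e.2.choose_spec.choose)⁻¹ •
    (ρ e.2.choose_spec.choose - ρ e.2.choose)

section Realization

variable {lam : Sym2 ℕ → ℝ}

theorem sphericalOf_apply (ρ : ℕ → Pt) {e : OctE} {i j : ℕ} (h : IsOctEdge i j)
    (he : (e : Sym2 ℕ) = s(i, j)) :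
    sphericalOf lam ρ e = (sgnLen lam i j)⁻¹ • (ρ j - ρ i) := by
  have key : ∀ a b, s(a, b) = s(i, j) →
      (sgnLen lam a b)⁻¹ • (ρ b - ρ a) = (sgnLen lam i j)⁻¹ • (ρ j - ρ i) := by
    intro a b hab
    rcases Sym2.eq_iff.mp hab with ⟨rfl, rfl⟩ | ⟨rfl, rfl⟩
    · rfl
    · rw [sgnLen_swap lam h, inv_neg, neg_smul, ← smul_neg, neg_sub]
  exact key _ _ (e.2.choose_spec.choose_spec.2.symm.trans he)

theorem two_inner_sub_sub {ρ : ℕ → Pt} (hρ : Compatible lam ρ) {i j m : ℕ}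
    (hf : IsOctFace i j m) :
    2 * ⟪ρ j - ρ i, ρ j - ρ m⟫_ℝ = lam s(i, j) ^ 2 + lam s(m, j) ^ 2 - lam s(i, m) ^ 2 := by
  have hij := hρ i j hf.isOctEdge
  have hmj := hρ m j hf.rotate.isOctEdge.symm
  have him := hρ i m hf.rotate.rotate.isOctEdge.symm
  rw [dist_comm, dist_eq_norm] at hij hmj him
  rw [← hij, ← hmj, ← him, ← sub_sub_sub_cancel_left (ρ i) (ρ m) (ρ j),
    norm_sub_sq_real (ρ j - ρ i)]
  ring

theorem sphCompatible_sphericalOf (hpos : ∀ i j, IsOctEdge i j → 0 < lam s(i, j))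
    {ρ : ℕ → Pt} (hρ : Compatible lam ρ) : SphCompatible lam (sphericalOf lam ρ) := by
  refine ⟨fun ⟨_, i, j, h, he⟩ => ?_, fun e f i j m hf he hf' => ?_⟩
  · rw [sphericalOf_apply ρ h he, norm_smul, norm_inv, Real.norm_eq_abs, abs_sgnLen (hpos i j h),
      ← dist_eq_norm, dist_comm, hρ i j h, inv_mul_cancel₀ (hpos i j h).ne']
  · have hij := hf.isOctEdge
    have hmj := hf.rotate.isOctEdge.symm
    rw [sphericalOf_apply ρ hij he, sphericalOf_apply ρ hmj hf', real_inner_smul_left,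
      real_inner_smul_right, ← two_inner_sub_sub hρ hf]
    field_simp [sgnLen_ne_zero (hpos i j hij), sgnLen_ne_zero (hpos m j hmj)]

theorem exists_compatible_sphericalOf_eq (hpos : ∀ i j, IsOctEdge i j → 0 < lam s(i, j))
    {q : OctE → Pt} (hq : SphCompatible lam q) :
    ∃ ρ, Compatible lam ρ ∧ sphericalOf lam ρ = q := by
  obtain ⟨ρ, hρ⟩ := exists_potential_of_face_sum_eq_zero (edgeVec lam q)
    (fun i j _ => edgeVec_swap i j) (fun i j m hf => edgeVec_add_add_eq_zero hq hf)
  refine ⟨ρ, fun i j h => ?_, funext fun ⟨_, i, j, h, he⟩ => ?_⟩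
  · rw [dist_comm, dist_eq_norm, hρ i j h, edgeVec_of_isOctEdge h, norm_smul, hq.1, mul_one,
      Real.norm_eq_abs, abs_sgnLen (hpos i j h)]
  · rw [sphericalOf_apply ρ h he, hρ i j h, edgeVec_of_isOctEdge h,
      inv_smul_smul₀ (sgnLen_ne_zero (hpos i j h))]
    exact congrArg q (Subtype.ext he.symm)

theorem sphCongruent_sphericalOf_iff (hpos : ∀ i j, IsOctEdge i j → 0 < lam s(i, j))
    (ρ₁ ρ₂ : ℕ → Pt) :
    SphCongruent (sphericalOf lam ρ₂) (sphericalOf lam ρ₁) ↔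
      ∃ A : Pt ≃ₗᵢ[ℝ] Pt, ∀ i j, IsOctEdge i j → ρ₁ j - ρ₁ i = A (ρ₂ j - ρ₂ i) := by
  refine exists_congr fun A => ⟨fun hA i j h => ?_, fun hA ⟨_, i, j, h, he⟩ => ?_⟩
  · have := hA h.toOctE
    rwa [sphericalOf_apply ρ₁ h rfl, sphericalOf_apply ρ₂ h rfl, map_smul,
      smul_right_inj (inv_ne_zero (sgnLen_ne_zero (hpos i j h)))] at this
  · rw [sphericalOf_apply ρ₁ h he, sphericalOf_apply ρ₂ h he, map_smul, hA i j h]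

end Realization

theorem octCongruent_iff_exists_linearIsometryEquiv (ρ₁ ρ₂ : ℕ → Pt) :
    OctCongruent ρ₁ ρ₂ ↔
      ∃ A : Pt ≃ₗᵢ[ℝ] Pt, ∀ i j, IsOctEdge i j → ρ₁ j - ρ₁ i = A (ρ₂ j - ρ₂ i) := by
  constructor
  · rintro ⟨σ, hσ⟩
    refine ⟨σ.toRealLinearIsometryEquiv, fun i j h => ?_⟩
    rw [hσ i h.1, hσ j h.2.1, map_sub, IsometryEquiv.toRealLinearIsometryEquiv_apply,
      IsometryEquiv.toRealLinearIsometryEquiv_apply, sub_sub_sub_cancel_right]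
  · rintro ⟨A, hA⟩
    have hconst := eq_of_forall_isOctEdge (fun n => ρ₁ n - A (ρ₂ n)) fun i j h => by
      rw [sub_eq_sub_iff_sub_eq_sub, hA j i h.symm, map_sub]
    refine ⟨A.toIsometryEquiv.trans (IsometryEquiv.addRight (ρ₁ 1 - A (ρ₂ 1))), fun i hi => ?_⟩
    rw [IsometryEquiv.trans_apply, IsometryEquiv.addRight_apply,
      LinearIsometryEquiv.coe_toIsometryEquiv, ← hconst i hi, add_sub_cancel]

theorem octCongruent_iff_sphCongruent {lam : Sym2 ℕ → ℝ}
    (hpos : ∀ i j, IsOctEdge i j → 0 < lam s(i, j)) (ρ₁ ρ₂ : ℕ → Pt) :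
    OctCongruent ρ₁ ρ₂ ↔ SphCongruent (sphericalOf lam ρ₂) (sphericalOf lam ρ₁) := by
  rw [octCongruent_iff_exists_linearIsometryEquiv, sphCongruent_sphericalOf_iff hpos]

def InfinitelyManyUpTo {α : Type*} (P : α → Prop) (R : α → α → Prop) : Prop :=
  ∃ S : Set α, S.Infinite ∧ (∀ a ∈ S, P a) ∧ ∀ a ∈ S, ∀ b ∈ S, a ≠ b → ¬ R a b

theorem InfinitelyManyUpTo.map {α β : Type*} {P : α → Prop} {R : α → α → Prop}
    {P' : β → Prop} {R' : β → β → Prop} (f : α → β) (hP : ∀ a, P a → P' (f a))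
    (hR' : ∀ b, R' b b) (hR : ∀ a b, P a → P b → R' (f a) (f b) → R b a)
    (h : InfinitelyManyUpTo P R) : InfinitelyManyUpTo P' R' := by
  obtain ⟨S, hS, hPS, hRS⟩ := h
  have hinj : S.InjOn f := fun a ha b hb hab => by
    by_contra hne
    exact hRS b hb a ha (Ne.symm hne) (hR a b (hPS a ha) (hPS b hb) (hab ▸ hR' (f a)))
  refine ⟨f '' S, hS.image hinj, ?_, ?_⟩
  · rintro _ ⟨a, ha, rfl⟩
    exact hP a (hPS a ha)
  · rintro _ ⟨a, ha, rfl⟩ _ ⟨b, hb, rfl⟩ hne hab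
    exact hRS b hb a ha (fun h => hne (h ▸ rfl)) (hR a b (hPS a ha) (hPS b hb) hab)

theorem flexible_iff_sphere_flexible_general
    (lam : Sym2 ℕ → ℝ)
    (hpos : ∀ i j, IsOctEdge i j → 0 < lam s(i, j)) :
    Flexible lam ↔
      ∃ Q : Set (OctE → Pt), Q.Infinite ∧ (∀ q ∈ Q, SphCompatible lam q) ∧
        ∀ q₁ ∈ Q, ∀ q₂ ∈ Q, q₁ ≠ q₂ → ¬ SphCongruent q₁ q₂ := by
  change InfinitelyManyUpTo (Compatible lam) OctCongruent ↔
    InfinitelyManyUpTo (SphCompatible lam) SphCongruent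
  choose! realize hrealize using fun q (hq : SphCompatible lam q) =>
    exists_compatible_sphericalOf_eq hpos hq
  constructor
  · exact InfinitelyManyUpTo.map (sphericalOf lam) (fun ρ => sphCompatible_sphericalOf hpos)
      (fun _ => ⟨LinearIsometryEquiv.refl ℝ Pt, fun _ => rfl⟩)
      (fun ρ₁ ρ₂ _ _ => ((octCongruent_iff_sphCongruent hpos ρ₂ ρ₁).mpr))
  · refine InfinitelyManyUpTo.map realize (fun q hq => (hrealize q hq).1)
      (fun _ => ⟨IsometryEquiv.refl Pt, fun _ _ => rfl⟩) fun q₁ q₂ hq₁ hq₂ h => ?_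
    rwa [octCongruent_iff_sphCongruent hpos, (hrealize q₁ hq₁).2, (hrealize q₂ hq₂).2] at h

/-- A labeling of `G_oct` whose faces satisfy the strict triangle inequality is
flexible in `ℝ³` if and only if it admits infinitely many pairwise non-congruent
compatible spherical realizations. -/
theorem flexible_iff_sphere_flexible
    (lam : Sym2 ℕ → ℝ)
    (hpos : ∀ i j, IsOctEdge i j → 0 < lam s(i, j))
    (htri : ∀ i j m, IsOctFace i j m → lam s(i, m) < lam s(i, j) + lam s(j, m)) :
    Flexible lam ↔
      ∃ Q : Set (OctE → Pt), Q.Infinite ∧ (∀ q ∈ Q, SphCompatible lam q) ∧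
        ∀ q₁ ∈ Q, ∀ q₂ ∈ Q, q₁ ≠ q₂ → ¬ SphCongruent q₁ q₂ :=
  flexible_iff_sphere_flexible_general lam hpos
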